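/- For P(t) = t² - 2bt + 1 with b ≠ ±1, the ring R_2(P) = ℂ[t,t⁻¹,u]/(u² - (t² - 2bt + 1)) is isomorphic as a ℂ-algebra to ℂ[s, s⁻¹, (s+b+1)⁻¹, (s+b-1)⁻¹]. -/

import Mathlib

/-!
Write `v = u + t - b`. On the conic `u² = t² - 2bt + 1` one has `v (u - t + b) = 1 - b²`,
`(v + b)² - 1 = 2tv` and `v² - b² + 1 = 2uv`. Hence `v` is a unit when `b ≠ ±1`, and so are
`v + b ± 1`, because `(v + b + 1)(t + 1 - u) = 2(1 + b)t` and `(v + b - 1)(u + 1 - t) = 2(1 - b)t`.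
So `s ↦ v` defines a map `ℂ[s, s⁻¹, (s+b+1)⁻¹, (s+b-1)⁻¹] → R_2(P)`, and
`t ↦ ((s + b)² - 1) / 2s`, `u ↦ (s² - b² + 1) / 2s` defines its inverse.
-/

open Polynomial
open LaurentPolynomial (T)
open scoped LaurentPolynomial

namespace LaurentPolynomial

variable {R A : Type*} [CommSemiring R] [CommSemiring A] [Algebra R A]

instance : IsScalarTower R R[X] R[T;T⁻¹] :=
  .of_algebraMap_eq fun r => by simp [algebraMap_eq_toLaurent]

theorem algHom_ext_of_T_one {f g : R[T;T⁻¹] →ₐ[R] A} (h : f (T 1) = g (T 1)) : f = g :=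
  IsLocalization.algHom_ext (Submonoid.powers (X : R[X])) <| Polynomial.algHom_ext <| by
    simpa [Algebra.algHom, algebraMap_eq_toLaurent] using h

noncomputable def aevalUnit (x : Aˣ) : R[T;T⁻¹] →ₐ[R] A :=
  IsLocalization.Away.liftAlgHom (X : R[X]) (f := aeval (x : A)) (by simp)

theorem aevalUnit_toLaurent (x : Aˣ) (p : R[X]) :
    aevalUnit x (toLaurent p) = aeval (x : A) p := by
  rw [aevalUnit, ← algebraMap_eq_toLaurent, IsLocalization.Away.liftAlgHom_apply,
    IsLocalization.Away.lift_eq]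
  rfl

end LaurentPolynomial

theorem isUnit_two_of_invertible (R : Type*) {A : Type*} [CommSemiring R] [Semiring A]
    [Algebra R A] [Invertible (2 : R)] : IsUnit (2 : A) := by
  rw [← map_ofNat (algebraMap R A) 2]
  exact (isUnit_of_invertible 2).map _

section

variable {R : Type*} [CommRing R]

-- Not an `abbrev`: through the quotient's own instances `algebraMap R (R₂ P)` does not elaborate.
def R₂ (P : R[X]) : Type _ :=
  R[T;T⁻¹][X] ⧸ Ideal.span {(X : R[T;T⁻¹][X]) ^ 2 - C (toLaurent P)}

namespace R₂

variable (P : R[X])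

noncomputable instance : CommRing (R₂ P) := Ideal.Quotient.commRing _

noncomputable instance : Algebra R (R₂ P) := Ideal.Quotient.algebra R

noncomputable def mk : R[T;T⁻¹][X] →ₐ[R] R₂ P := Ideal.Quotient.mkₐ R _

noncomputable def t : R₂ P := mk P (C (T 1))

noncomputable def u : R₂ P := mk P X

theorem isUnit_t : IsUnit (t P) :=
  ((LaurentPolynomial.isUnit_T 1).map C).map _

theorem mk_C_toLaurent (p : R[X]) : mk P (C (toLaurent p)) = aeval (t P) p := by
  let ι : R[X] →ₐ[R] R₂ P := (mk P).comp (CAlgHom.comp toLaurentAlg)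
  have hιX : ι X = t P := by simp [ι, t]
  rw [← hιX, aeval_algHom_apply, aeval_X_left_apply]
  rfl

theorem u_sq : u P ^ 2 = aeval (t P) P := by
  rw [u, ← map_pow, ← mk_C_toLaurent]
  exact Ideal.Quotient.eq.mpr (Ideal.subset_span rfl)

variable {P} {S : Type*} [CommRing S] [Algebra R S]

noncomputable def lift (x : Sˣ) (y : S) (h : y ^ 2 = aeval (x : S) P) : R₂ P →ₐ[R] S :=
  Ideal.Quotient.liftₐ _ (aevalTower (LaurentPolynomial.aevalUnit x) y) fun a ha => by
    obtain ⟨c, rfl⟩ := Ideal.mem_span_singleton'.mp ha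
    simp [LaurentPolynomial.aevalUnit_toLaurent, h]

section lift

variable (x : Sˣ) (y : S) (h : y ^ 2 = aeval (x : S) P)

theorem lift_mk (p : R[T;T⁻¹][X]) :
    lift x y h (mk P p) = aevalTower (LaurentPolynomial.aevalUnit x) y p :=
  rfl

theorem lift_t : lift x y h (t P) = x := by
  rw [t, lift_mk, aevalTower_C, ← toLaurent_X, LaurentPolynomial.aevalUnit_toLaurent, aeval_X]

theorem lift_u : lift x y h (u P) = y := by
  rw [u, lift_mk, aevalTower_X]

end lift

theorem algHom_ext {f g : R₂ P →ₐ[R] S} (ht : f (t P) = g (t P)) (hu : f (u P) = g (u P)) :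
    f = g :=
  Ideal.Quotient.algHom_ext _ <|
    Polynomial.algHom_ext' (LaurentPolynomial.algHom_ext_of_T_one ht) hu

end R₂

end

section Conic

variable {S : Type*} [CommRing S] {b s t u w : S}

-- `w` plays the role of `(2s)⁻¹`.
def conicParamT (b s w : S) : S := ((s + b) ^ 2 - 1) * w

def conicParamU (b s w : S) : S := (s ^ 2 - b ^ 2 + 1) * w

theorem map_conicParamT {S' F : Type*} [CommRing S'] [FunLike F S S'] [RingHomClass F S S']
    (f : F) : f (conicParamT b s w) = conicParamT (f b) (f s) (f w) := by
  simp [conicParamT]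

theorem map_conicParamU {S' F : Type*} [CommRing S'] [FunLike F S S'] [RingHomClass F S S']
    (f : F) : f (conicParamU b s w) = conicParamU (f b) (f s) (f w) := by
  simp [conicParamU]

section Param

variable (hw : w * (2 * s) = 1)
include hw

theorem conicParamU_sq :
    conicParamU b s w ^ 2 = conicParamT b s w ^ 2 - 2 * b * conicParamT b s w + 1 := by
  unfold conicParamT conicParamU
  linear_combination (2 * w * (1 - b ^ 2 - s * b) * (s + b) + 1) * hw

theorem conicParamU_add_conicParamT : conicParamU b s w + conicParamT b s w - b = s := by
  unfold conicParamT conicParamU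
  linear_combination (s + b) * hw

end Param

section OnConic

variable (h : u ^ 2 = t ^ 2 - 2 * b * t + 1)
include h

theorem conicParamT_of_conic (hw : w * (2 * (u + t - b)) = 1) :
    conicParamT b (u + t - b) w = t := by
  unfold conicParamT
  linear_combination w * h + t * hw

theorem conicParamU_of_conic (hw : w * (2 * (u + t - b)) = 1) :
    conicParamU b (u + t - b) w = u := by
  unfold conicParamU
  linear_combination (-w) * h + u * hw

theorem isUnit_of_conic (ht : IsUnit t) (h2 : IsUnit (2 : S)) (hb : IsUnit (1 - b ^ 2)) :
    IsUnit ((u + t - b) * (u + t + 1) * (u + t - 1)) := by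
  obtain ⟨hb₁, hb₂⟩ := IsUnit.mul_iff.mp <|
    (show (1 + b) * (1 - b) = 1 - b ^ 2 by ring) ▸ hb
  have hv : IsUnit (u + t - b) := isUnit_of_mul_isUnit_left (y := u - t + b) <| by
    rw [show (u + t - b) * (u - t + b) = 1 - b ^ 2 by linear_combination h]
    exact hb
  have hv₁ : IsUnit (u + t + 1) := isUnit_of_mul_isUnit_left (y := t + 1 - u) <| by
    rw [show (u + t + 1) * (t + 1 - u) = 2 * (1 + b) * t by linear_combination -h]
    exact (h2.mul hb₁).mul ht
  have hv₂ : IsUnit (u + t - 1) := isUnit_of_mul_isUnit_left (y := u + 1 - t) <| by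
    rw [show (u + t - 1) * (u + 1 - t) = 2 * (1 - b) * t by linear_combination h]
    exact (h2.mul hb₂).mul ht
  exact (hv.mul hv₁).mul hv₂

end OnConic

end Conic

section

variable {R : Type*} [CommRing R] {b : R}

noncomputable abbrev conicPoly (b : R) : R[X] := X ^ 2 - C (2 * b) * X + 1

noncomputable abbrev puncturingPoly (b : R) : R[X] := X * (X + C (b + 1)) * (X + C (b - 1))

abbrev PuncturedLine (b : R) : Type _ := Localization.Away (puncturingPoly b)

theorem aeval_conicPoly {A : Type*} [CommRing A] [Algebra R A] (x : A) :
    aeval x (conicPoly b) = x ^ 2 - 2 * algebraMap R A b * x + 1 := by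
  simp [map_ofNat]

namespace PuncturedLine

variable (b) in
noncomputable def s : PuncturedLine b := algebraMap R[X] _ X

theorem algebraMap_eq_aeval (p : R[X]) :
    algebraMap R[X] (PuncturedLine b) p = aeval (s b) p := by
  rw [s, aeval_algebraMap_apply, aeval_X_left_apply]

variable [Invertible (2 : R)]

theorem isUnit_two_mul_s : IsUnit (2 * s b) :=
  (isUnit_two_of_invertible R).mul <|
    IsLocalization.Away.isUnit_of_dvd (puncturingPoly b)
      ⟨(X + C (b + 1)) * (X + C (b - 1)), by ring⟩

variable (b) in
noncomputable def w : PuncturedLine b := ↑(isUnit_two_mul_s (b := b)).unit⁻¹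

theorem w_mul_two_mul_s : w b * (2 * s b) = 1 :=
  IsUnit.val_inv_mul _

theorem isUnit_conicParamT :
    IsUnit (conicParamT (algebraMap R (PuncturedLine b) b) (s b) (w b)) := by
  have h : IsUnit (algebraMap R[X] (PuncturedLine b) ((X + C (b + 1)) * (X + C (b - 1)))) :=
    IsLocalization.Away.isUnit_of_dvd (puncturingPoly b) ⟨X, by ring⟩
  rw [algebraMap_eq_aeval] at h
  refine IsUnit.mul ?_ (Units.isUnit _)
  convert h using 1
  simp only [map_mul, map_add, aeval_X, aeval_C, map_sub, map_one]
  ring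

end PuncturedLine

namespace R₂

open PuncturedLine

theorem u_sq_conicPoly : u (conicPoly b) ^ 2 =
    t (conicPoly b) ^ 2 - 2 * algebraMap R (R₂ (conicPoly b)) b * t (conicPoly b) + 1 := by
  rw [u_sq, aeval_conicPoly]

variable (b) in
noncomputable def v : R₂ (conicPoly b) :=
  u (conicPoly b) + t (conicPoly b) - algebraMap R (R₂ (conicPoly b)) b

variable [Invertible (2 : R)]

variable (b) in
noncomputable def toPuncturedLine : R₂ (conicPoly b) →ₐ[R] PuncturedLine b :=
  lift isUnit_conicParamT.unit (conicParamU (algebraMap R _ b) (s b) (w b)) <| by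
    rw [IsUnit.unit_spec, aeval_conicPoly]
    exact conicParamU_sq w_mul_two_mul_s

variable (hb : IsUnit (1 - b ^ 2))
include hb

theorem isUnit_aeval_puncturingPoly : IsUnit (aeval (v b) (puncturingPoly b)) := by
  have hb' : IsUnit (1 - algebraMap R (R₂ (conicPoly b)) b ^ 2) := by
    simpa using hb.map (algebraMap R (R₂ (conicPoly b)))
  convert isUnit_of_conic u_sq_conicPoly (isUnit_t _) (isUnit_two_of_invertible R) hb' using 1
  simp only [v, map_mul, map_add, aeval_X, aeval_C, map_sub, map_one]
  ring

noncomputable def ofPuncturedLine : PuncturedLine b →ₐ[R] R₂ (conicPoly b) :=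
  IsLocalization.Away.liftAlgHom (puncturingPoly b) (isUnit_aeval_puncturingPoly hb)

theorem ofPuncturedLine_s : ofPuncturedLine hb (s b) = v b := by
  rw [ofPuncturedLine, IsLocalization.Away.liftAlgHom_apply, s, IsLocalization.Away.lift_eq]
  exact aeval_X _

theorem toPuncturedLine_comp_ofPuncturedLine :
    (toPuncturedLine b).comp (ofPuncturedLine hb) = AlgHom.id R _ := by
  refine IsLocalization.algHom_ext (Submonoid.powers (puncturingPoly b)) (Polynomial.algHom_ext ?_)
  change toPuncturedLine b (ofPuncturedLine hb (s b)) = s b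
  rw [ofPuncturedLine_s, v, map_sub, map_add, toPuncturedLine, lift_u, lift_t, IsUnit.unit_spec,
    AlgHom.commutes]
  exact conicParamU_add_conicParamT w_mul_two_mul_s

theorem ofPuncturedLine_comp_toPuncturedLine :
    (ofPuncturedLine hb).comp (toPuncturedLine b) = AlgHom.id R _ := by
  have hw : ofPuncturedLine hb (w b) * (2 * v b) = 1 := by
    rw [← ofPuncturedLine_s hb, ← map_ofNat (ofPuncturedLine hb) 2, ← map_mul, ← map_mul,
      w_mul_two_mul_s, map_one]
  refine algHom_ext ?_ ?_
  · change ofPuncturedLine hb (toPuncturedLine b (t _)) = t _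
    rw [toPuncturedLine, lift_t, IsUnit.unit_spec, map_conicParamT, AlgHom.commutes,
      ofPuncturedLine_s]
    exact conicParamT_of_conic u_sq_conicPoly hw
  · change ofPuncturedLine hb (toPuncturedLine b (u _)) = u _
    rw [toPuncturedLine, lift_u, map_conicParamU, AlgHom.commutes, ofPuncturedLine_s]
    exact conicParamU_of_conic u_sq_conicPoly hw

noncomputable def equivPuncturedLine : R₂ (conicPoly b) ≃ₐ[R] PuncturedLine b :=
  .ofAlgHom (toPuncturedLine b) (ofPuncturedLine hb)
    (toPuncturedLine_comp_ofPuncturedLine hb) (ofPuncturedLine_comp_toPuncturedLine hb)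

end R₂

end

/-- For `P(t) = t² - 2bt + 1` with `b ≠ ±1`, `R_2(P)` is isomorphic as a
ℂ-algebra to `ℂ[s, s⁻¹, (s+b+1)⁻¹, (s+b-1)⁻¹]`, realized as the localization of
`ℂ[s]` away from `s(s+b+1)(s+b-1)`. -/
theorem stmt_7 (b : ℂ) (hb : b ≠ 1) (hb' : b ≠ -1) :
    Nonempty
      ((Polynomial (LaurentPolynomial ℂ) ⧸
          Ideal.span {(X : Polynomial (LaurentPolynomial ℂ)) ^ 2 -
            C (Polynomial.toLaurent (X ^ 2 - C (2 * b) * X + 1))}) ≃ₐ[ℂ]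
        Localization.Away ((X * (X + C (b + 1)) * (X + C (b - 1))) : Polynomial ℂ)) := by
  have h : IsUnit (1 - b ^ 2) := by
    refine Ne.isUnit ?_
    rw [sub_ne_zero, ne_comm, sq_ne_one_iff]
    exact ⟨hb, hb'⟩
  exact ⟨R₂.equivPuncturedLine h⟩
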